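/- (McDiarmid's inequality) Suppose X₁,…,X_N are independent random variables taking values in a set 𝔛 and f: 𝔛^N → ℝ satisfies the bounded-differences condition: changing the i-th coordinate changes f by at most cᵢ. Then for any ε > 0, Pr( E[f(X₁,…,X_N)] − f(X₁,…,X_N) ≥ ε ) ≤ exp( −2ε² / Σᵢ cᵢ² ). -/

import Mathlib

/-!
Integrate out one coordinate at a time. For a product measure on `α₀ × Π j, αⱼ`, the
conditional mean `F a = ∫ f (a, y) dy` oscillates by at most `c₀`, so by Hoeffding's lemma
`F - 𝔼 f` is sub-Gaussian with variance proxy `c₀² / 4`, while by induction each fibre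
`f (a, ·) - F a` is sub-Gaussian with proxy `∑_{j ≥ 1} cⱼ² / 4`; the moment generating functions
multiply under Fubini. Independence makes the law of `(X₁, …, X_N)` the product of the marginals,
and the Chernoff bound for a proxy `∑ cᵢ² / 4` is exactly `exp (-2ε² / ∑ cᵢ²)`.
-/

open MeasureTheory ProbabilityTheory Real
open scoped NNReal

def BoundedDifferences {ι : Type*} [DecidableEq ι] {α : ι → Type*} (f : (∀ i, α i) → ℝ)
    (c : ι → ℝ) : Prop :=
  ∀ i (x : ∀ j, α j) (x' : α i), |f x - f (Function.update x i x')| ≤ c i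

theorem exists_forall_mem_Icc_of_sub_le {ι : Type*} [Nonempty ι] {g : ι → ℝ} {c : ℝ}
    (h : ∀ x y, g x - g y ≤ c) : ∃ a, ∀ x, g x ∈ Set.Icc a (a + c) := by
  obtain ⟨x₀⟩ := ‹Nonempty ι›
  have hbdd : BddBelow (Set.range g) := ⟨g x₀ - c, by rintro _ ⟨y, rfl⟩; linarith [h x₀ y]⟩
  refine ⟨⨅ x, g x, fun x => ⟨ciInf_le hbdd x, ?_⟩⟩
  have : g x - c ≤ ⨅ y, g y := le_ciInf fun y => by linarith [h x y]
  linarith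

theorem ProbabilityTheory.hasSubgaussianMGF_sub_integral_of_sub_le {α : Type*}
    [MeasurableSpace α] {μ : Measure α} [IsProbabilityMeasure μ] {F : α → ℝ} {c : ℝ}
    (hF : Measurable F) (h : ∀ x y, F x - F y ≤ c) :
    HasSubgaussianMGF (fun x => F x - ∫ y, F y ∂μ) ((‖c‖₊ / 2) ^ 2) μ := by
  have : Nonempty α := nonempty_of_isProbabilityMeasure μ
  obtain ⟨a, ha⟩ := exists_forall_mem_Icc_of_sub_le h
  simpa using hasSubgaussianMGF_of_mem_Icc hF.aemeasurable (ae_of_all μ ha)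

theorem ProbabilityTheory.HasSubgaussianMGF.prod_add {α β : Type*} [MeasurableSpace α]
    [MeasurableSpace β] {μ : Measure α} {ν : Measure β} [SFinite μ] [SFinite ν] {g : α → ℝ}
    {h : α × β → ℝ} {c₁ c₂ : ℝ≥0} (hg : HasSubgaussianMGF g c₁ μ)
    (hh : ∀ᵐ a ∂μ, HasSubgaussianMGF (fun b => h (a, b)) c₂ ν)
    (hint : ∀ t, Integrable (fun p => exp (t * (g p.1 + h p))) (μ.prod ν)) :
    HasSubgaussianMGF (fun p => g p.1 + h p) (c₁ + c₂) (μ.prod ν) where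
  integrable_exp_mul := hint
  mgf_le t := calc
    mgf (fun p => g p.1 + h p) (μ.prod ν) t
        = ∫ a, exp (t * g a) * mgf (fun b => h (a, b)) ν t ∂μ := by
      simp only [mgf, mul_add, exp_add, ← integral_const_mul]
      exact integral_prod _ (by simpa only [mul_add, exp_add] using hint t)
    _ ≤ ∫ a, exp (t * g a) * exp (c₂ * t ^ 2 / 2) ∂μ := by
      refine integral_mono_of_nonneg (ae_of_all _ fun a => mul_nonneg (exp_pos _).le mgf_nonneg)
        ((hg.integrable_exp_mul t).mul_const _) ?_
      filter_upwards [hh] with a ha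
      gcongr
      exact ha.mgf_le t
    _ = mgf g μ t * exp (c₂ * t ^ 2 / 2) := integral_mul_const _ _
    _ ≤ exp (c₁ * t ^ 2 / 2) * exp (c₂ * t ^ 2 / 2) := by gcongr; exact hg.mgf_le t
    _ = exp ((c₁ + c₂ : ℝ≥0) * t ^ 2 / 2) := by rw [← exp_add]; push_cast; ring_nf

namespace BoundedDifferences

section Finite

variable {ι : Type*} [DecidableEq ι] {α : ι → Type*} {f : (∀ i, α i) → ℝ} {c : ι → ℝ}

theorem abs_sub_le_sum [Fintype ι] (h : BoundedDifferences f c) (x y : ∀ i, α i) :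
    |f x - f y| ≤ ∑ i, c i := by
  suffices ∀ s : Finset ι, |f x - f (s.piecewise y x)| ≤ ∑ i ∈ s, c i by
    simpa using this Finset.univ
  intro s
  induction s using Finset.induction with
  | empty => simp
  | @insert j s hj ih =>
    rw [Finset.piecewise_insert, Finset.sum_insert hj]
    calc |f x - f (Function.update (s.piecewise y x) j (y j))|
        ≤ |f x - f (s.piecewise y x)|
          + |f (s.piecewise y x) - f (Function.update (s.piecewise y x) j (y j))| :=
          abs_sub_le _ _ _
      _ ≤ ∑ i ∈ s, c i + c j := add_le_add ih (h j _ _)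
      _ = c j + ∑ i ∈ s, c i := add_comm _ _

theorem exists_abs_le [Fintype ι] [Nonempty (∀ i, α i)] (h : BoundedDifferences f c) :
    ∃ M, ∀ x, |f x| ≤ M := by
  obtain ⟨x₀⟩ := ‹Nonempty (∀ i, α i)›
  refine ⟨|f x₀| + ∑ i, c i, fun x => ?_⟩
  linarith [h.abs_sub_le_sum x x₀, abs_sub_abs_le_abs_sub (f x) (f x₀)]

end Finite

section Fin

variable {n : ℕ} {α : Fin (n + 1) → Type*} {f : (∀ i, α i) → ℝ} {c : Fin (n + 1) → ℝ}

theorem insertNth (h : BoundedDifferences f c) (i : Fin (n + 1)) (a : α i) :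
    BoundedDifferences (fun y => f (i.insertNth a y)) (fun j => c (i.succAbove j)) :=
  fun j y x' => by simpa only [Fin.insertNth_update] using h (i.succAbove j) (i.insertNth a y) x'

theorem sub_insertNth_le (h : BoundedDifferences f c) (i : Fin (n + 1)) (a a' : α i)
    (y : ∀ j, α (i.succAbove j)) : f (i.insertNth a y) - f (i.insertNth a' y) ≤ c i := by
  simpa only [Fin.update_insertNth] using (le_abs_self _).trans (h i (i.insertNth a y) a')

end Fin

theorem hasSubgaussianMGF_sub_integral_pi {n : ℕ} {α : Fin n → Type*}
    [∀ i, MeasurableSpace (α i)] (ν : ∀ i, Measure (α i)) [∀ i, IsProbabilityMeasure (ν i)]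
    {f : (∀ i, α i) → ℝ} {c : Fin n → ℝ} (hf : Measurable f) (h : BoundedDifferences f c) :
    HasSubgaussianMGF (fun x => f x - ∫ y, f y ∂Measure.pi ν) (∑ i, (‖c i‖₊ / 2) ^ 2)
      (Measure.pi ν) := by
  induction n with
  | zero =>
    have hconst : ∀ x, f x - ∫ y, f y ∂Measure.pi ν = 0 := fun x => by
      simp [Subsingleton.elim _ x]
    simp [hconst]
  | succ n ih =>
    set e := MeasurableEquiv.piFinSuccAbove α 0
    set P := Measure.pi fun j => ν (Fin.succAbove 0 j)
    have : IsProbabilityMeasure P := Measure.pi.instIsProbabilityMeasure _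
    have he : MeasurePreserving e (Measure.pi ν) ((ν 0).prod P) :=
      measurePreserving_piFinSuccAbove ν 0
    set g : α 0 × (∀ j, α (Fin.succAbove 0 j)) → ℝ := fun p => f (e.symm p)
    have hg : Measurable g := hf.comp e.symm.measurable
    have (i : Fin (n + 1)) : Nonempty (α i) := nonempty_of_isProbabilityMeasure (ν i)
    obtain ⟨M, hM⟩ := h.exists_abs_le
    have hg_int : Integrable g ((ν 0).prod P) :=
      .of_bound hg.aestronglyMeasurable M (ae_of_all _ fun p => hM _)
    have hslice_int (a : α 0) : Integrable (fun y => g (a, y)) P :=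
      .of_bound (hg.comp measurable_prodMk_left).aestronglyMeasurable M (ae_of_all _ fun p => hM _)
    set F : α 0 → ℝ := fun a => ∫ y, g (a, y) ∂P
    have hF : Measurable F := hg.stronglyMeasurable.integral_prod_right'.measurable
    set E := ∫ y, f y ∂Measure.pi ν
    have hE : E = ∫ a, F a ∂ν 0 := by
      rw [← integral_prod g hg_int, ← he.integral_comp']
      simp only [g, e.symm_apply_apply]
      rfl
    have hF_osc (a a' : α 0) : F a - F a' ≤ c 0 := by
      rw [← integral_sub (hslice_int a) (hslice_int a')]
      calc ∫ y, g (a, y) - g (a', y) ∂P ≤ ∫ _, c 0 ∂P :=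
            integral_mono ((hslice_int a).sub (hslice_int a')) (integrable_const _)
              fun y => h.sub_insertNth_le 0 a a' y
        _ = c 0 := by rw [integral_const, probReal_univ, one_smul]
    have hF_subG : HasSubgaussianMGF (fun a => F a - E) ((‖c 0‖₊ / 2) ^ 2) (ν 0) :=
      hE ▸ hasSubgaussianMGF_sub_integral_of_sub_le hF hF_osc
    have hslice_subG (a : α 0) :
        HasSubgaussianMGF (fun y => g (a, y) - F a) (∑ j, (‖c (Fin.succAbove 0 j)‖₊ / 2) ^ 2) P :=
      ih _ (hg.comp measurable_prodMk_left) (h.insertNth 0 a)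
    have hsum := hF_subG.prod_add (h := fun p => g p - F p.1) (ae_of_all _ hslice_subG)
      fun t => integrable_exp_mul_of_mem_Icc (a := -M - E) (b := M - E) (by fun_prop)
        (ae_of_all _ fun p => by
          have := abs_le.1 (hM (e.symm p))
          constructor <;> simp only [g] <;> linarith)
    rw [Fin.sum_univ_succAbove _ 0]
    rw [← he.map_eq] at hsum
    refine (hsum.of_map he.measurable.aemeasurable).congr (ae_of_all _ fun x => ?_)
    simp only [g, e.symm_apply_apply, Function.comp_apply]
    ring

end BoundedDifferences

/-- McDiarmid's inequality: if X₁,…,X_N are independent and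
f : 𝔛^N → ℝ has the bounded-differences property with constants cᵢ, then
Pr(E[f(X)] − f(X) ≥ ε) ≤ exp(−2ε² / Σᵢ cᵢ²). -/
theorem mcdiarmid_inequality
    {𝔛 Ω : Type*} [MeasurableSpace 𝔛] [MeasurableSpace Ω]
    (μ : Measure Ω) [IsProbabilityMeasure μ]
    {N : ℕ} (X : Fin N → Ω → 𝔛)
    (hIndep : iIndepFun X μ)
    (hXmeas : ∀ i, Measurable (X i))
    (f : (Fin N → 𝔛) → ℝ) (hf : Measurable f) (c : Fin N → ℝ)
    (hbd : ∀ (i : Fin N) (x : Fin N → 𝔛) (x' : 𝔛),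
      |f x - f (Function.update x i x')| ≤ c i)
    (ε : ℝ) (hε : 0 < ε) :
    μ {ω | (∫ ω', f (fun k => X k ω') ∂μ) - f (fun k => X k ω) ≥ ε}
      ≤ ENNReal.ofReal (Real.exp (-2 * ε ^ 2 / ∑ i, c i ^ 2)) := by
  have hX : Measurable fun ω k => X k ω := measurable_pi_lambda _ hXmeas
  have (i : Fin N) : IsProbabilityMeasure (μ.map (X i)) :=
    Measure.isProbabilityMeasure_map (hXmeas i).aemeasurable
  have hlaw : μ.map (fun ω k => X k ω) = Measure.pi fun i => μ.map (X i) :=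
    (iIndepFun_iff_map_fun_eq_pi_map fun i => (hXmeas i).aemeasurable).1 hIndep
  have hsubG := BoundedDifferences.hasSubgaussianMGF_sub_integral_pi (fun i => μ.map (X i)) hf hbd
  rw [← hlaw, integral_map hX.aemeasurable hf.aestronglyMeasurable] at hsubG
  have htail := (hsubG.of_map hX.aemeasurable).neg.measure_ge_le hε.le
  have hexponent :
      -ε ^ 2 / (2 * ((∑ i, (‖c i‖₊ / 2) ^ 2 : ℝ≥0) : ℝ)) = -2 * ε ^ 2 / ∑ i, c i ^ 2 := by
    push_cast
    simp only [Real.norm_eq_abs, div_pow, sq_abs, ← Finset.sum_div]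
    generalize ∑ i, c i ^ 2 = S
    rw [show 2 * (S / 2 ^ 2) = S / 2 by ring, div_div_eq_mul_div]
    ring
  rw [hexponent] at htail
  rw [ENNReal.le_ofReal_iff_toReal_le (measure_ne_top μ _) (Real.exp_pos _).le]
  convert htail using 3 with ω
  simp [Measure.real]
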